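/- (Decay of the stationary corrector coefficients under exponential nonresonance.) Let h₀ ≥ α₀ > 0, V₀ ∈ ℝ^d with |V₀| ≤ M, and suppose |(V₀·k)² − |k| tanh(h₀|k|)| > δ e^{−h̄|k|} for all k ∈ ℤ^d\{0}, with 0 < h̄ < α₀. Then the coefficients F_k := (V₀·k)² sech(h₀|k|)/||k| tanh(h₀|k|) − (V₀·k)²| satisfy F_k ≤ C(M, δ, α₀, h̄) |k|² e^{−(α₀−h̄)|k|} for all k ≠ 0; in particular ∑_{k≠0} (1+|k|²)^s F_k² < ∞ for every s ≥ 0, so the locally stationary corrector ζ₁ with ζ̂_{1,k} = −F_k b̂_k (up to sign) belongs to H^s(𝕋^d) whenever b ∈ L²(𝕋^d). -/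

import Mathlib

/-!
Since `cosh y ≥ eʸ/2`, the numerator of `F_k` is at most `d M² |k|² · 2 e^{-α₀|k|}`
(Cauchy–Schwarz), while nonresonance bounds its denominator below by `δ e^{-h̄|k|}`; hence
`F_k ≤ (2 d M²/δ) |k|² e^{-(α₀-h̄)|k|}`. Exponential decay absorbs every polynomial weight, and
`e^{-c|k|}` is summable over `ℤᵈ` because it is dominated by the product
`∏ᵢ e^{-c|kᵢ|/(d+1)}` of one-dimensional geometric series. Finally the weighted `F_k²` are
bounded by their sum, so multiplying by an `ℓ²` sequence keeps summability.
-/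

open Real

noncomputable section

/-- Euclidean norm of an integer frequency vector `k ∈ ℤ^d`. -/
def knorm (d : ℕ) (k : Fin d → ℤ) : ℝ := Real.sqrt (∑ i, ((k i : ℝ)) ^ 2)

lemma knorm_nonneg (d : ℕ) (k : Fin d → ℤ) : 0 ≤ knorm d k := Real.sqrt_nonneg _

lemma sq_knorm (d : ℕ) (k : Fin d → ℤ) : knorm d k ^ 2 = ∑ i, ((k i : ℝ)) ^ 2 :=
  Real.sq_sqrt (by positivity)

lemma abs_le_knorm {d : ℕ} (k : Fin d → ℤ) (i : Fin d) : |(k i : ℝ)| ≤ knorm d k := by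
  rw [← Real.sqrt_sq_eq_abs]
  exact Real.sqrt_le_sqrt
    (Finset.single_le_sum (fun j _ => sq_nonneg ((k j : ℝ))) (Finset.mem_univ i))

lemma sum_abs_le_mul_knorm {d : ℕ} (k : Fin d → ℤ) : ∑ i, |(k i : ℝ)| ≤ d * knorm d k := by
  simpa using Finset.sum_le_sum (s := Finset.univ) fun i _ => abs_le_knorm k i

lemma sq_sum_mul_le_mul_sq_knorm {d : ℕ} (k : Fin d → ℤ) (V : Fin d → ℝ) :
    (∑ i, (k i : ℝ) * V i) ^ 2 ≤ d * ‖V‖ ^ 2 * knorm d k ^ 2 := by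
  have hV : ∑ i, V i ^ 2 ≤ d * ‖V‖ ^ 2 := by
    simpa using Finset.sum_le_sum (s := Finset.univ) fun i _ =>
      (sq_le_sq₀ (abs_nonneg (V i)) (norm_nonneg V)).mpr (norm_le_pi_norm V i)
  calc (∑ i, (k i : ℝ) * V i) ^ 2 ≤ (∑ i, ((k i : ℝ)) ^ 2) * ∑ i, V i ^ 2 :=
        Finset.sum_mul_sq_le_sq_mul_sq _ _ _
    _ ≤ knorm d k ^ 2 * (d * ‖V‖ ^ 2) := by
        rw [sq_knorm]; gcongr
    _ = d * ‖V‖ ^ 2 * knorm d k ^ 2 := by ring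

open scoped Nat

lemma one_div_cosh_le_two_mul_exp_neg (x : ℝ) : 1 / cosh x ≤ 2 * exp (-x) := by
  have h : exp (-x) * exp x = 1 := by rw [← exp_add]; simp
  rw [div_le_iff₀ (cosh_pos x), cosh_eq]
  nlinarith [sq_nonneg (exp (-x))]

lemma pow_mul_exp_neg_mul_le (m : ℕ) {ε y : ℝ} (hε : 0 < ε) (hy : 0 ≤ y) :
    y ^ m * exp (-ε * y) ≤ m ! / ε ^ m := by
  have h := pow_div_factorial_le_exp (ε * y) (by positivity) m
  rw [div_le_iff₀ (by positivity), mul_pow] at h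
  rw [le_div_iff₀ (by positivity), neg_mul, exp_neg]
  calc y ^ m * (exp (ε * y))⁻¹ * ε ^ m = ε ^ m * y ^ m * (exp (ε * y))⁻¹ := by ring
    _ ≤ exp (ε * y) * m ! * (exp (ε * y))⁻¹ := by gcongr
    _ = m ! := by field_simp

lemma exists_one_add_sq_rpow_mul_exp_neg_mul_le (s : ℝ) {ε : ℝ} (hε : 0 < ε) :
    ∃ A, ∀ x : ℝ, 0 ≤ x → (1 + x ^ 2) ^ s * exp (-ε * x) ≤ A := by
  set n := ⌈s⌉₊
  refine ⟨exp ε * ((2 * n) ! / ε ^ (2 * n)), fun x hx => ?_⟩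
  have hs : (1 + x ^ 2) ^ s ≤ (1 + x) ^ (2 * n) := by
    calc (1 + x ^ 2) ^ s ≤ (1 + x ^ 2) ^ (n : ℝ) :=
          rpow_le_rpow_of_exponent_le (by nlinarith) (Nat.le_ceil s)
      _ = (1 + x ^ 2) ^ n := rpow_natCast _ _
      _ ≤ ((1 + x) ^ 2) ^ n := by gcongr; nlinarith
      _ = (1 + x) ^ (2 * n) := by rw [pow_mul]
  calc (1 + x ^ 2) ^ s * exp (-ε * x) ≤ (1 + x) ^ (2 * n) * exp (-ε * x) := by gcongr
    _ = exp ε * ((1 + x) ^ (2 * n) * exp (-ε * (1 + x))) := by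
        rw [mul_left_comm, ← exp_add]; ring_nf
    _ ≤ exp ε * ((2 * n) ! / ε ^ (2 * n)) := by
        gcongr; exact pow_mul_exp_neg_mul_le _ hε (by linarith)

lemma summable_prod_apply_of_nonneg {α : Type*} {f : α → ℝ} (hf0 : 0 ≤ f) (hf : Summable f)
    (d : ℕ) : Summable fun k : Fin d → α => ∏ i, f (k i) := by
  induction d with
  | zero => exact .of_finite
  | succ n ih =>
    rw [← (Fin.consEquiv fun _ => α).summable_iff]
    simpa [Function.comp_def, Fin.consEquiv, Fin.prod_univ_succ] using
      hf.mul_of_nonneg ih hf0 fun _ => Finset.prod_nonneg fun _ _ => hf0 _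

lemma summable_exp_neg_mul_abs_int {c : ℝ} (hc : 0 < c) :
    Summable fun n : ℤ => exp (-c * |(n : ℝ)|) := by
  have h : Summable fun n : ℕ => exp (n * -c) := summable_exp_nat_mul_iff.mpr (by linarith)
  exact .of_nat_of_neg (h.congr fun n => by simp [mul_comm])
    (h.congr fun n => by simp [mul_comm])

lemma summable_exp_neg_mul_knorm (d : ℕ) {c : ℝ} (hc : 0 < c) :
    Summable fun k : Fin d → ℤ => exp (-c * knorm d k) := by
  have hprod := summable_prod_apply_of_nonneg (fun _ => (exp_pos _).le)
    (summable_exp_neg_mul_abs_int (c := c / (d + 1)) (by positivity)) d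
  refine hprod.of_nonneg_of_le (fun _ => (exp_pos _).le) fun k => ?_
  rw [← exp_sum, exp_le_exp, ← Finset.mul_sum, neg_mul, neg_mul, neg_le_neg_iff,
    div_mul_eq_mul_div, div_le_iff₀ (by positivity)]
  nlinarith [sum_abs_le_mul_knorm k, knorm_nonneg d k]

lemma mul_one_div_cosh_div_le {x N D K α₀ hbar δ h₀ : ℝ} (hx : 0 ≤ x) (hh : α₀ ≤ h₀)
    (hδ : 0 < δ) (hN0 : 0 ≤ N) (hN : N ≤ K * x ^ 2) (hD : δ * exp (-hbar * x) < D) :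
    N * (1 / cosh (h₀ * x)) / D ≤ 2 * K / δ * x ^ 2 * exp (-(α₀ - hbar) * x) := by
  have hsech : 1 / cosh (h₀ * x) ≤ 2 * exp (-α₀ * x) :=
    (one_div_cosh_le_two_mul_exp_neg _).trans (by gcongr; nlinarith)
  calc N * (1 / cosh (h₀ * x)) / D
      ≤ K * x ^ 2 * (2 * exp (-α₀ * x)) / (δ * exp (-hbar * x)) := by
        have hK : 0 ≤ K * x ^ 2 := hN0.trans hN
        gcongr
    _ = 2 * K / δ * x ^ 2 * exp (-(α₀ - hbar) * x) := by
        rw [show -(α₀ - hbar) * x = -α₀ * x - -hbar * x by ring, exp_sub]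
        field_simp

lemma summable_one_add_sq_knorm_rpow_mul_sq {d : ℕ} {C ε : ℝ} (hε : 0 < ε)
    {F : (Fin d → ℤ) → ℝ} (hF : ∀ k, |F k| ≤ C * knorm d k ^ 2 * exp (-ε * knorm d k))
    (s : ℝ) : Summable fun k => (1 + knorm d k ^ 2) ^ s * F k ^ 2 := by
  obtain ⟨A, hA⟩ := exists_one_add_sq_rpow_mul_exp_neg_mul_le (s + 2) hε
  refine ((summable_exp_neg_mul_knorm d hε).mul_left (C ^ 2 * A)).of_nonneg_of_le
    (fun k => by positivity) fun k => ?_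
  set x := knorm d k
  have hx : 0 ≤ x := knorm_nonneg d k
  have hw : (1 + x ^ 2) ^ s * x ^ 4 ≤ (1 + x ^ 2) ^ (s + 2) := by
    rw [rpow_add (by positivity), rpow_two]
    gcongr
    nlinarith
  calc (1 + x ^ 2) ^ s * F k ^ 2
      ≤ (1 + x ^ 2) ^ s * (C * x ^ 2 * exp (-ε * x)) ^ 2 := by
        rw [← sq_abs (F k)]
        gcongr
        exact hF k
    _ = C ^ 2 * ((1 + x ^ 2) ^ s * x ^ 4 * exp (-ε * x)) * exp (-ε * x) := by ring
    _ ≤ C ^ 2 * A * exp (-ε * x) := by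
        gcongr
        exact (mul_le_mul_of_nonneg_right hw (exp_pos _).le).trans (hA x hx)

lemma summable_mul_of_summable_of_nonneg {ι : Type*} {a b : ι → ℝ} (ha : Summable a)
    (ha0 : 0 ≤ a) (hb : Summable b) (hb0 : 0 ≤ b) : Summable fun i => a i * b i :=
  (hb.mul_left (∑' j, a j)).of_nonneg_of_le (fun i => mul_nonneg (ha0 i) (hb0 i))
    fun i => mul_le_mul_of_nonneg_right (ha.le_tsum i fun j _ => ha0 j) (hb0 i)

theorem stationary_corrector_decay_general (d : ℕ) (α₀ hbar δ M h₀ : ℝ)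
    (hh : α₀ ≤ h₀) (hbarlt : hbar < α₀)
    (hδ : 0 < δ) :
    ∃ C > (0:ℝ), ∀ V : Fin d → ℝ, ‖fun i => V i‖ ≤ M →
      -- exponential nonresonance
      (∀ k : Fin d → ℤ, k ≠ 0 →
        δ * Real.exp (-hbar * knorm d k) <
          |(∑ i, (k i : ℝ) * V i) ^ 2 - knorm d k * Real.tanh (h₀ * knorm d k)|) →
      ∀ F : (Fin d → ℤ) → ℝ,
      (F 0 = 0) →
      (∀ k : Fin d → ℤ, k ≠ 0 →
        F k = (∑ i, (k i : ℝ) * V i) ^ 2 * (1 / Real.cosh (h₀ * knorm d k)) /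
          |knorm d k * Real.tanh (h₀ * knorm d k) - (∑ i, (k i : ℝ) * V i) ^ 2|) →
      -- pointwise decay of the coefficients
      ((∀ k : Fin d → ℤ, k ≠ 0 →
          F k ≤ C * knorm d k ^ 2 * Real.exp (-(α₀ - hbar) * knorm d k)) ∧
        -- weighted square summability at every order s ≥ 0
        (∀ s : ℝ, 0 ≤ s →
          Summable fun k : Fin d → ℤ => (1 + knorm d k ^ 2) ^ s * (F k) ^ 2) ∧
        -- H^s bound for the stationary corrector whenever b ∈ L²
        (∀ bc : (Fin d → ℤ) → ℂ, Summable (fun k => ‖bc k‖ ^ 2) →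
          ∀ s : ℝ, 0 ≤ s →
            Summable fun k : Fin d → ℤ =>
              (1 + knorm d k ^ 2) ^ s * ‖-(F k : ℂ) * bc k‖ ^ 2)) := by
  refine ⟨2 * (d * M ^ 2) / δ + 1, by positivity, fun V hV hres F hF0 hF => ?_⟩
  have hFnn (k : Fin d → ℤ) : 0 ≤ F k := by
    rcases eq_or_ne k 0 with rfl | hk
    · exact hF0.ge
    · rw [hF k hk]; have := cosh_pos (h₀ * knorm d k); positivity
  have hdecay (k : Fin d → ℤ) :
      F k ≤ (2 * (d * M ^ 2) / δ + 1) * knorm d k ^ 2 * exp (-(α₀ - hbar) * knorm d k) := by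
    rcases eq_or_ne k 0 with rfl | hk
    · rw [hF0]; positivity
    have hdot : (∑ i, (k i : ℝ) * V i) ^ 2 ≤ d * M ^ 2 * knorm d k ^ 2 :=
      (sq_sum_mul_le_mul_sq_knorm k V).trans (by gcongr)
    have hden := hres k hk
    rw [abs_sub_comm] at hden
    rw [hF k hk]
    refine (mul_one_div_cosh_div_le (knorm_nonneg d k) hh hδ (sq_nonneg _) hdot hden).trans ?_
    gcongr
    linarith
  have hweighted (s : ℝ) : Summable fun k => (1 + knorm d k ^ 2) ^ s * F k ^ 2 :=
    summable_one_add_sq_knorm_rpow_mul_sq (sub_pos.mpr hbarlt)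
      (fun k => (abs_of_nonneg (hFnn k)).trans_le (hdecay k)) s
  refine ⟨fun k _ => hdecay k, fun s _ => hweighted s, fun bc hbc s _ => ?_⟩
  simpa [norm_mul, abs_of_nonneg (hFnn _), mul_pow, mul_assoc] using
    summable_mul_of_summable_of_nonneg (hweighted s) (fun k => by positivity) hbc
      (fun k => by positivity)

/-- Decay of the stationary corrector coefficients under exponential
nonresonance: the coefficients
`F_k = (V₀·k)² sech(h₀|k|)/||k|tanh(h₀|k|) − (V₀·k)²|` decay like
`|k|² e^{−(α₀−h̄)|k|}`, so that `∑ (1+|k|²)^s F_k² < ∞` for every `s ≥ 0` and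
the stationary corrector `ζ₁` with `ζ̂₁ₖ = −F_k b̂ₖ` (up to sign) lies in
`H^s(𝕋^d)` whenever `b ∈ L²(𝕋^d)`. -/
theorem stationary_corrector_decay (d : ℕ) (α₀ hbar δ M h₀ : ℝ)
    (hα : 0 < α₀) (hh : α₀ ≤ h₀) (hhbar : 0 < hbar) (hbarlt : hbar < α₀)
    (hδ : 0 < δ) (hM : 0 ≤ M) :
    ∃ C > (0:ℝ), ∀ V : Fin d → ℝ, ‖fun i => V i‖ ≤ M →
      -- exponential nonresonance
      (∀ k : Fin d → ℤ, k ≠ 0 →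
        δ * Real.exp (-hbar * knorm d k) <
          |(∑ i, (k i : ℝ) * V i) ^ 2 - knorm d k * Real.tanh (h₀ * knorm d k)|) →
      ∀ F : (Fin d → ℤ) → ℝ,
      (F 0 = 0) →
      (∀ k : Fin d → ℤ, k ≠ 0 →
        F k = (∑ i, (k i : ℝ) * V i) ^ 2 * (1 / Real.cosh (h₀ * knorm d k)) /
          |knorm d k * Real.tanh (h₀ * knorm d k) - (∑ i, (k i : ℝ) * V i) ^ 2|) →
      -- pointwise decay of the coefficients
      ((∀ k : Fin d → ℤ, k ≠ 0 →
          F k ≤ C * knorm d k ^ 2 * Real.exp (-(α₀ - hbar) * knorm d k)) ∧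
        -- weighted square summability at every order s ≥ 0
        (∀ s : ℝ, 0 ≤ s →
          Summable fun k : Fin d → ℤ => (1 + knorm d k ^ 2) ^ s * (F k) ^ 2) ∧
        -- H^s bound for the stationary corrector whenever b ∈ L²
        (∀ bc : (Fin d → ℤ) → ℂ, Summable (fun k => ‖bc k‖ ^ 2) →
          ∀ s : ℝ, 0 ≤ s →
            Summable fun k : Fin d → ℤ =>
              (1 + knorm d k ^ 2) ^ s * ‖-(F k : ℂ) * bc k‖ ^ 2)) :=
  stationary_corrector_decay_general d α₀ hbar δ M h₀ hh hbarlt hδ
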